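/- arXiv:2406.13728 — 5 statements merged into one kernel-verified Lean document; each statement's English description precedes it below -/
import Mathlib

section
/- For nonnegative integers n and c, the sum over k from 0 to n of binom(n,k)/binom(n+c, k+c) equals (n+c+1)/(c+1). -/
lemma term_eq (n c k : ℕ) (hk : k ≤ n) :
    (Nat.choose n k : ℚ) / (Nat.choose (n + c) (k + c) : ℚ)
      = (Nat.choose (k + c) c : ℚ) * ((n + c + 1) / ((c + 1) * Nat.choose (n + c + 1) (c + 1))) := by
  have h1 : (Nat.choose n k : ℚ)
      = (Nat.factorial n : ℚ) / ((Nat.factorial k : ℚ) * (Nat.factorial (n - k) : ℚ)) :=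
    Nat.cast_choose ℚ hk
  have h2 : (Nat.choose (n + c) (k + c) : ℚ)
      = (Nat.factorial (n + c) : ℚ) / ((Nat.factorial (k + c) : ℚ) * (Nat.factorial (n - k) : ℚ)) := by
    rw [Nat.cast_choose ℚ (by omega : k + c ≤ n + c), show n + c - (k + c) = n - k by omega]
  have h3 : (Nat.choose (k + c) c : ℚ)
      = (Nat.factorial (k + c) : ℚ) / ((Nat.factorial c : ℚ) * (Nat.factorial k : ℚ)) := by
    rw [Nat.cast_choose ℚ (by omega : c ≤ k + c), show k + c - c = k by omega]
  have h4 : (Nat.choose (n + c + 1) (c + 1) : ℚ)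
      = (Nat.factorial (n + c + 1) : ℚ) / ((Nat.factorial (c + 1) : ℚ) * (Nat.factorial n : ℚ)) := by
    rw [Nat.cast_choose ℚ (by omega : c + 1 ≤ n + c + 1), show n + c + 1 - (c + 1) = n by omega]
  have e1 : (Nat.factorial (n + c + 1) : ℚ) = (n + c + 1) * (Nat.factorial (n + c) : ℚ) := by
    rw [Nat.factorial_succ]; push_cast; ring
  have e2 : (Nat.factorial (c + 1) : ℚ) = (c + 1) * (Nat.factorial c : ℚ) := by
    rw [Nat.factorial_succ]; push_cast; ring
  have f0 : ∀ m : ℕ, (Nat.factorial m : ℚ) ≠ 0 := fun m => Nat.cast_ne_zero.2 (Nat.factorial_ne_zero m)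
  rw [h1, h2, h3, h4, e1, e2]
  have hc1 : ((c : ℚ) + 1) ≠ 0 := by positivity
  have hn1 : ((n : ℚ) + c + 1) ≠ 0 := by positivity
  field_simp

/-- ∑_{k=0}^{n} C(n,k)/C(n+c,k+c) = (n+c+1)/(c+1). -/
theorem stmt3 (n c : ℕ) :
    ∑ k ∈ Finset.range (n + 1),
      (Nat.choose n k : ℚ) / (Nat.choose (n + c) (k + c) : ℚ)
      = (n + c + 1) / (c + 1) := by
  rw [Finset.sum_congr rfl (fun k hk => term_eq n c k (Nat.lt_succ_iff.mp (Finset.mem_range.mp hk)))]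
  rw [← Finset.sum_mul, ← Nat.cast_sum, Nat.sum_range_add_choose n c]
  have hch : (Nat.choose (n + c + 1) (c + 1) : ℚ) ≠ 0 := by
    exact_mod_cast (Nat.choose_pos (by omega : c + 1 ≤ n + c + 1)).ne'
  have hc1 : ((c : ℚ) + 1) ≠ 0 := by positivity
  field_simp
end

section
/- In the free associative algebra NSym on generators h_1, h_2, …, with ribbon elements defined by r_α = ∑_{β ⪰ α} (−1)^{ℓ(α)−ℓ(β)} h_β, the ribbon multiplication rule holds: for compositions α = (α_1,…,α_n) and β = (β_1,…,β_k), r_α · r_β = r_{(α_1,…,α_n,β_1,…,β_k)} + r_{(α_1,…,α_{n−1}, α_n+β_1, β_2,…,β_k)}. -/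
def IsComposition (n : ℕ) (l : List ℕ) : Prop := (∀ x ∈ l, 0 < x) ∧ l.sum = n

def cset (l : List ℕ) : Finset ℕ :=
  (Finset.range (l.length - 1)).image (fun i => (l.take (i+1)).sum)


noncomputable def comps (n : ℕ) : Finset (List ℕ) :=
  (Finset.univ : Finset (Composition n)).image Composition.blocks

noncomputable def h (k : ℕ) : FreeAlgebra ℚ ℕ := if k = 0 then 1 else FreeAlgebra.ι ℚ k

noncomputable def hC (β : List ℕ) : FreeAlgebra ℚ ℕ := (β.map h).prod


noncomputable def rib (α : List ℕ) : FreeAlgebra ℚ ℕ :=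
  ∑ β ∈ (comps α.sum).filter (fun β => cset β ⊆ cset α),
    ((-1 : ℚ) ^ (α.length - β.length)) • hC β

lemma mem_comps {n : ℕ} {l : List ℕ} : l ∈ comps n ↔ (∀ x ∈ l, 0 < x) ∧ l.sum = n := by
  simp only [comps, Finset.mem_image, Finset.mem_univ, true_and]
  constructor
  · rintro ⟨c, rfl⟩
    exact ⟨fun x hx => c.blocks_pos hx, c.blocks_sum⟩
  · rintro ⟨h1, h2⟩
    exact ⟨⟨l, fun hx => h1 _ hx, h2⟩, rfl⟩

lemma mem_cset {l : List ℕ} {x : ℕ} :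
    x ∈ cset l ↔ ∃ i, i < l.length - 1 ∧ (l.take (i+1)).sum = x := by
  simp [cset, Finset.mem_image, Finset.mem_range]

lemma sum_take_le (l : List ℕ) {i j : ℕ} (hij : i ≤ j) :
    (l.take i).sum ≤ (l.take j).sum := by
  conv_rhs => rw [← List.take_append_drop i (l.take j)]
  rw [List.sum_append, List.take_take, min_eq_left hij]
  exact Nat.le_add_right _ _

lemma sum_take_lt {l : List ℕ} (hpos : ∀ x ∈ l, 0 < x) {i j : ℕ} (hij : i < j)
    (hj : j ≤ l.length) : (l.take i).sum < (l.take j).sum := by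
  have hi : i < l.length := lt_of_lt_of_le hij hj
  calc (l.take i).sum < (l.take (i+1)).sum := by
        rw [List.sum_take_succ l i hi]
        have : 0 < l[i] := hpos _ (l.getElem_mem hi)
        omega
    _ ≤ (l.take j).sum := sum_take_le l hij

lemma cset_pos {l : List ℕ} (hpos : ∀ x ∈ l, 0 < x) {x : ℕ} (hx : x ∈ cset l) : 0 < x := by
  obtain ⟨i, hi, rfl⟩ := mem_cset.mp hx
  have := sum_take_lt hpos (i := 0) (j := i+1) (by omega) (by omega)
  simpa using this

lemma head_le_cset {a : ℕ} {l : List ℕ} {x : ℕ} (hx : x ∈ cset (a :: l)) : a ≤ x := by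
  obtain ⟨i, hi, rfl⟩ := mem_cset.mp hx
  have := sum_take_le (a :: l) (i := 1) (j := i+1) (by omega)
  simpa using this

lemma card_cset {l : List ℕ} (hpos : ∀ x ∈ l, 0 < x) : (cset l).card = l.length - 1 := by
  rw [cset, Finset.card_image_of_injOn, Finset.card_range]
  intro i hi j hj hij
  simp only [Finset.mem_coe, Finset.mem_range] at hi hj
  by_contra hne
  rcases Nat.lt_or_ge i j with hlt | hge
  · exact absurd hij (Nat.ne_of_lt (sum_take_lt hpos (by omega) (by omega)))
  · have : j < i := by omega
    exact absurd hij.symm (Nat.ne_of_lt (sum_take_lt hpos (by omega) (by omega)))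

lemma length_le_of_cset_subset {γ α : List ℕ} (hγ : ∀ x ∈ γ, 0 < x) (hα : ∀ x ∈ α, 0 < x)
    (hγne : γ ≠ []) (hαne : α ≠ []) (hsub : cset γ ⊆ cset α) : γ.length ≤ α.length := by
  have h1 := card_cset hγ
  have h2 := card_cset hα
  have h3 := Finset.card_le_card hsub
  have h4 : γ.length ≠ 0 := fun hh => hγne (List.eq_nil_of_length_eq_zero hh)
  have h5 : α.length ≠ 0 := fun hh => hαne (List.eq_nil_of_length_eq_zero hh)
  omega

lemma cset_cons_cons (a b : ℕ) (t : List ℕ) :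
    cset (a :: b :: t) = insert a (cset ((a+b) :: t)) := by
  ext x
  simp only [Finset.mem_insert, mem_cset]
  constructor
  · rintro ⟨i, hi, rfl⟩
    rcases Nat.eq_zero_or_pos i with rfl | hipos
    · left; simp
    · right
      obtain ⟨j, rfl⟩ := Nat.exists_eq_add_of_lt hipos
      refine ⟨j, by simp at hi ⊢; omega, ?_⟩
      simp only [Nat.zero_add]
      rw [List.take_succ_cons, List.take_succ_cons, List.take_succ_cons]
      simp only [List.sum_cons]
      ring
  · rintro (rfl | ⟨i, hi, rfl⟩)
    · exact ⟨0, by simp, by simp⟩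
    · refine ⟨i + 1, by simp at hi ⊢; omega, ?_⟩
      rw [List.take_succ_cons, List.take_succ_cons, List.take_succ_cons]
      simp only [List.sum_cons]
      ring

lemma cset_cons {a : ℕ} {δ : List ℕ} (hδ : δ ≠ []) :
    cset (a :: δ) = insert a ((cset δ).image (a + ·)) := by
  ext x
  simp only [Finset.mem_insert, Finset.mem_image, mem_cset]
  constructor
  · rintro ⟨i, hi, rfl⟩
    rcases Nat.eq_zero_or_pos i with rfl | hipos
    · left; simp
    · right
      obtain ⟨j, rfl⟩ := Nat.exists_eq_add_of_lt hipos
      refine ⟨(δ.take (j+1)).sum, ⟨j, by simp at hi ⊢; omega, rfl⟩, ?_⟩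
      simp only [Nat.zero_add]
      rw [List.take_succ_cons, List.sum_cons]
  · rintro (rfl | ⟨y, ⟨i, hi, rfl⟩, rfl⟩)
    · refine ⟨0, ?_, by simp⟩
      have : δ.length ≠ 0 := fun hh => hδ (List.eq_nil_of_length_eq_zero hh)
      simp; omega
    · refine ⟨i + 1, by simp at hi ⊢; omega, ?_⟩
      rw [List.take_succ_cons, List.sum_cons]

lemma cset_singleton (a : ℕ) : cset [a] = ∅ := by simp [cset]

lemma rib_single {a : ℕ} (ha : 0 < a) : rib [a] = h a := by
  classical
  have hfilter : (comps ([a].sum)).filter (fun γ => cset γ ⊆ cset [a]) = {[a]} := by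
    ext γ
    simp only [Finset.mem_filter, mem_comps, Finset.mem_singleton]
    constructor
    · rintro ⟨⟨hpos, hsum⟩, hsub⟩
      have hcs : cset γ = ∅ := by
        rw [cset_singleton] at hsub
        exact Finset.subset_empty.mp hsub
      have hcard := card_cset hpos
      rw [hcs] at hcard
      simp only [Finset.card_empty] at hcard
      cases γ with
      | nil => simp at hsum; omega
      | cons x l =>
        have hl : l = [] := List.eq_nil_of_length_eq_zero (by simp at hcard; omega)
        subst hl
        simp at hsum ⊢
        omega
    · rintro rfl
      exact ⟨⟨by intro x hx; simp at hx; omega, by simp⟩, subset_rfl⟩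
  rw [rib, hfilter, Finset.sum_singleton]
  simp [hC]

lemma rib_R {a b : ℕ} {t : List ℕ} (ha : 0 < a) (hb : 0 < b) (ht : ∀ x ∈ t, 0 < x) :
    rib (a :: b :: t) = h a * rib (b :: t) - rib ((a + b) :: t) := by
  classical
  set n := (a :: b :: t).sum with hn
  have hpos2 : ∀ x ∈ (a+b) :: t, 0 < x := by
    intro x hx; simp at hx; rcases hx with rfl | hx
    · omega
    · exact ht x hx
  have hcset : cset (a :: b :: t) = insert a (cset ((a+b) :: t)) := cset_cons_cons a b t
  have hanotin : a ∉ cset ((a+b) :: t) := fun hmem => by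
    have := head_le_cset hmem; omega
  rw [rib]
  rw [← Finset.sum_filter_add_sum_filter_not
    ((comps (a :: b :: t).sum).filter (fun γ => cset γ ⊆ cset (a :: b :: t)))
    (fun γ => a ∈ cset γ)]
  -- second sum
  have hS2 : (((comps (a :: b :: t).sum).filter (fun γ => cset γ ⊆ cset (a::b::t))).filter
        (fun γ => ¬ a ∈ cset γ))
      = (comps (a :: b :: t).sum).filter (fun γ => cset γ ⊆ cset ((a+b)::t)) := by
    ext γ
    simp only [Finset.mem_filter, and_assoc]
    constructor
    · rintro ⟨hγ, hsub, hna⟩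
      refine ⟨hγ, fun x hx => ?_⟩
      have hx2 := hsub hx
      rw [hcset] at hx2
      rcases Finset.mem_insert.mp hx2 with rfl | hx3
      · exact absurd hx hna
      · exact hx3
    · rintro ⟨hγ, hsub⟩
      exact ⟨hγ, fun x hx => by rw [hcset]; exact Finset.mem_insert_of_mem (hsub hx),
        fun hmem => hanotin (hsub hmem)⟩
  have hsum2 : ∑ γ ∈ (comps (a :: b :: t).sum).filter (fun γ => cset γ ⊆ cset ((a+b)::t)),
      ((-1:ℚ)^((a::b::t).length - γ.length)) • hC γ = - rib ((a+b)::t) := by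
    rw [rib]
    have hsums : ((a+b)::t).sum = (a :: b :: t).sum := by simp; ring
    rw [hsums, ← Finset.sum_neg_distrib]
    refine Finset.sum_congr rfl fun γ hγ => ?_
    simp only [Finset.mem_filter] at hγ
    obtain ⟨hγc, hγsub⟩ := hγ
    obtain ⟨hγpos, hγsum⟩ := mem_comps.mp hγc
    have hγne : γ ≠ [] := by
      intro hh; subst hh; simp at hγsum; omega
    have hlen := length_le_of_cset_subset hγpos hpos2 hγne (by simp) hγsub
    have hexp : (a::b::t).length - γ.length = (((a+b)::t).length - γ.length) + 1 := by
      simp at hlen ⊢; omega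
    rw [hexp, pow_succ, mul_neg_one, neg_smul]
  -- first sum
  have hT : (((comps (a :: b :: t).sum).filter (fun γ => cset γ ⊆ cset (a::b::t))).filter
        (fun γ => a ∈ cset γ))
      = ((comps ((b::t).sum)).filter (fun δ => cset δ ⊆ cset (b::t))).image (fun δ => a :: δ) := by
    ext γ
    rw [Finset.mem_filter, Finset.mem_filter, Finset.mem_image]
    constructor
    · rintro ⟨⟨hγc, hsub⟩, hmem⟩
      obtain ⟨hγpos, hγsum⟩ := mem_comps.mp hγc
      obtain ⟨i, hi, hsumi⟩ := mem_cset.mp hmem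
      have hγne2 : 2 ≤ γ.length := by omega
      have h0 : a ≤ (γ.take 1).sum := by
        have hmem1 : (γ.take 1).sum ∈ cset γ := mem_cset.mpr ⟨0, by omega, rfl⟩
        have hx2 := hsub hmem1
        rw [hcset] at hx2
        rcases Finset.mem_insert.mp hx2 with he | hm
        · omega
        · have := head_le_cset hm; omega
      have hi0 : i = 0 := by
        by_contra hne
        have := sum_take_lt hγpos (i := 1) (j := i+1) (by omega) (by omega)
        omega
      subst hi0
      cases γ with
      | nil => simp at hγne2
      | cons x δ =>
        simp only [List.take_succ_cons, List.take_zero, List.sum_cons, List.sum_nil,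
          add_zero] at hsumi
        subst hsumi
        have hδpos : ∀ y ∈ δ, 0 < y := fun y hy => hγpos y (by simp [hy])
        have hδne : δ ≠ [] := by
          intro hh; subst hh; simp at hγne2
        refine ⟨δ, Finset.mem_filter.mpr ⟨mem_comps.mpr ⟨hδpos, ?_⟩, ?_⟩, rfl⟩
        · simp only [List.sum_cons] at hγsum ⊢
          omega
        · intro z hz
          have hzpos : 0 < z := cset_pos hδpos hz
          have hax : x + z ∈ cset (x :: δ) := by
            rw [cset_cons hδne]
            exact Finset.mem_insert_of_mem (Finset.mem_image.mpr ⟨z, hz, rfl⟩)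
          have h2 := hsub hax
          rw [cset_cons (show (b::t) ≠ [] by simp)] at h2
          rcases Finset.mem_insert.mp h2 with he | hm
          · omega
          · obtain ⟨y, hy, hxy⟩ := Finset.mem_image.mp hm
            have : z = y := by omega
            subst this; exact hy
    · rintro ⟨δ, hδmem, rfl⟩
      rw [Finset.mem_filter] at hδmem
      obtain ⟨hδc, hδsub⟩ := hδmem
      obtain ⟨hδpos, hδsum⟩ := mem_comps.mp hδc
      have hδne : δ ≠ [] := by
        intro hh; subst hh; simp at hδsum; omega
      refine ⟨⟨mem_comps.mpr ⟨?_, ?_⟩, ?_⟩, ?_⟩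
      · intro x hx; simp at hx; rcases hx with rfl | hx
        · exact ha
        · exact hδpos x hx
      · simp at hδsum ⊢; omega
      · rw [cset_cons hδne, cset_cons (show (b::t) ≠ [] by simp)]
        exact Finset.insert_subset_insert _ (Finset.image_subset_image hδsub)
      · rw [cset_cons hδne]; exact Finset.mem_insert_self _ _
  have hinj : ∀ x ∈ (comps ((b::t).sum)).filter (fun δ => cset δ ⊆ cset (b::t)),
      ∀ y ∈ (comps ((b::t).sum)).filter (fun δ => cset δ ⊆ cset (b::t)),
      a :: x = a :: y → x = y := by
    intro x _ y _ hxy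
    simpa using hxy
  have hsum1 : ∑ γ ∈ (((comps (a :: b :: t).sum).filter
        (fun γ => cset γ ⊆ cset (a::b::t))).filter (fun γ => a ∈ cset γ)),
      ((-1:ℚ)^((a::b::t).length - γ.length)) • hC γ = h a * rib (b::t) := by
    rw [hT, Finset.sum_image hinj, rib, Finset.mul_sum]
    refine Finset.sum_congr rfl fun δ hδ => ?_
    have hexp : (a::b::t).length - (a::δ).length = (b::t).length - δ.length := by
      simp [Nat.succ_sub_succ]
    have hhC : hC (a :: δ) = h a * hC δ := by simp [hC]
    rw [hexp, hhC, mul_smul_comm]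
  rw [hS2, hsum1, hsum2, sub_eq_add_neg]

def mend : List ℕ → ℕ → List ℕ
  | [], b => [b]
  | [a], b => [a + b]
  | a :: c :: t, b => a :: mend (c :: t) b

def hm (a : ℕ) : List ℕ → List ℕ
  | [] => []
  | m :: s => (a + m) :: s

lemma mend_cons (a b : ℕ) {l : List ℕ} (hl : l ≠ []) : mend (a :: l) b = a :: mend l b := by
  cases l with
  | nil => exact absurd rfl hl
  | cons c t => rfl

lemma mend_ne_nil : ∀ (l : List ℕ) (b : ℕ), mend l b ≠ []
  | [], b => by simp [mend]
  | [a], b => by simp [mend]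
  | a :: c :: t, b => by rw [mend_cons a b (by simp)]; simp

lemma mend_pos : ∀ (l : List ℕ), (∀ x ∈ l, 0 < x) → ∀ (b : ℕ), 0 < b →
    ∀ x ∈ mend l b, 0 < x
  | [], _, b, hb, x, hx => by simp [mend] at hx; omega
  | [a], hl, b, hb, x, hx => by
    simp [mend] at hx; have := hl a (by simp); omega
  | a :: c :: t, hl, b, hb, x, hx => by
    rw [mend_cons a b (by simp)] at hx
    rcases List.mem_cons.mp hx with rfl | hx
    · exact hl x (by simp)
    · exact mend_pos (c :: t) (fun y hy => hl y (by simp [hy])) b hb x hx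

lemma mend_eq : ∀ (l : List ℕ) (hl : l ≠ []) (b : ℕ),
    mend l b = l.dropLast ++ [l.getLast hl + b]
  | [a], _, b => by simp [mend]
  | a :: c :: t, _, b => by
    rw [mend_cons a b (by simp), mend_eq (c :: t) (by simp) b]
    rw [List.dropLast_cons₂, List.getLast_cons (by simp : (c :: t) ≠ [])]
    simp

lemma mend_concat : ∀ (A : List ℕ) (x c : ℕ), mend (A ++ [x]) c = A ++ [x + c]
  | [], x, c => by simp [mend]
  | a :: A', x, c => by
    have h1 : (a :: A') ++ [x] = a :: (A' ++ [x]) := rfl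
    rw [h1, mend_cons a c (by simp), mend_concat A' x c]
    rfl

lemma mend_mend {α : List ℕ} (hα : α ≠ []) (b c : ℕ) :
    mend (mend α b) c = mend α (b + c) := by
  rw [mend_eq α hα b, mend_concat, mend_eq α hα (b + c)]
  congr 2
  omega

lemma hm_cons (a m : ℕ) (s : List ℕ) : hm a (m :: s) = (a + m) :: s := rfl

lemma mend_hm (a c b : ℕ) (t : List ℕ) : mend ((a + c) :: t) b = hm a (mend (c :: t) b) := by
  cases t with
  | nil => simp [mend, hm]; omega
  | cons d t' =>
    rw [mend_cons (a + c) b (by simp), mend_cons c b (by simp), hm_cons]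

lemma rib_R' {a : ℕ} {l : List ℕ} (hl : l ≠ []) (ha : 0 < a) (hlpos : ∀ x ∈ l, 0 < x) :
    rib (a :: l) = h a * rib l - rib (hm a l) := by
  cases l with
  | nil => exact absurd rfl hl
  | cons m s =>
    rw [hm_cons]
    exact rib_R ha (hlpos m (by simp)) (fun x hx => hlpos x (by simp [hx]))

lemma rib_mul_h : ∀ (α : List ℕ), α ≠ [] → (∀ x ∈ α, 0 < x) → ∀ {b : ℕ}, 0 < b →
    rib α * h b = rib (α ++ [b]) + rib (mend α b)
  | [a], _, hpos, b, hb => by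
    have ha : 0 < a := hpos a (by simp)
    rw [rib_single ha]
    have h1 : rib [a, b] = h a * rib [b] - rib [a + b] := rib_R ha hb (by simp)
    show h a * h b = rib [a, b] + rib [a + b]
    rw [h1, rib_single hb]
    abel
  | a :: c :: t, _, hpos, b, hb => by
    have ha : 0 < a := hpos a (by simp)
    have hc : 0 < c := hpos c (by simp)
    have ht : ∀ x ∈ t, 0 < x := fun x hx => hpos x (by simp [hx])
    have hct : ∀ x ∈ c :: t, 0 < x := fun x hx => hpos x (by simp at hx ⊢; tauto)
    have hact : ∀ x ∈ (a + c) :: t, 0 < x := by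
      intro x hx; simp at hx; rcases hx with rfl | hx
      · omega
      · exact ht x hx
    have ih1 := rib_mul_h (c :: t) (by simp) hct hb
    have ih2 := rib_mul_h ((a + c) :: t) (by simp) hact hb
    have hctb : ∀ x ∈ (c :: t) ++ [b], 0 < x := by
      intro x hx; simp at hx
      rcases hx with rfl | hx | rfl
      · exact hc
      · exact ht x hx
      · exact hb
    -- LHS
    have e0 : rib (a :: c :: t) = h a * rib (c :: t) - rib ((a + c) :: t) := by
      have := rib_R' (a := a) (l := c :: t) (by simp) ha hct
      rwa [hm_cons] at this
    -- RHS piece 1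
    have e1 : rib ((a :: c :: t) ++ [b])
        = h a * rib ((c :: t) ++ [b]) - rib (((a + c) :: t) ++ [b]) := by
      have := rib_R' (a := a) (l := (c :: t) ++ [b]) (by simp) ha hctb
      rwa [show hm a ((c :: t) ++ [b]) = ((a + c) :: t) ++ [b] from rfl] at this
    -- RHS piece 2
    have e2 : rib (mend (a :: c :: t) b)
        = h a * rib (mend (c :: t) b) - rib (mend ((a + c) :: t) b) := by
      rw [mend_cons a b (by simp)]
      have := rib_R' (a := a) (l := mend (c :: t) b) (mend_ne_nil _ _) ha
        (mend_pos (c :: t) hct b hb)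
      rwa [← mend_hm] at this
    rw [e0, e1, e2, sub_mul, mul_assoc, ih1, ih2, mul_add]
    abel

lemma key : ∀ (β' : List ℕ) (b : ℕ), 0 < b → (∀ x ∈ β', 0 < x) →
    ∀ (α : List ℕ), α ≠ [] → (∀ x ∈ α, 0 < x) →
    rib α * rib (b :: β') = rib (α ++ b :: β') + rib (mend α b ++ β')
  | [], b, hb, _, α, hαne, hαpos => by
    rw [rib_single hb, List.append_nil]
    exact rib_mul_h α hαne hαpos hb
  | c :: τ, b, hb, hβ', α, hαne, hαpos => by
    have hc : 0 < c := hβ' c (by simp)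
    have hτ : ∀ x ∈ τ, 0 < x := fun x hx => hβ' x (by simp [hx])
    have hcτ : ∀ x ∈ c :: τ, 0 < x := hβ'
    have e0 : rib (b :: c :: τ) = h b * rib (c :: τ) - rib ((b + c) :: τ) :=
      rib_R hb hc hτ
    have hαb_ne : α ++ [b] ≠ [] := by simp
    have hαb_pos : ∀ x ∈ α ++ [b], 0 < x := by
      intro x hx; simp at hx
      rcases hx with hx | rfl
      · exact hαpos x hx
      · exact hb
    have k1 := key τ c hc hτ (α ++ [b]) hαb_ne hαb_pos
    have k2 := key τ c hc hτ (mend α b) (mend_ne_nil α b) (mend_pos α hαpos b hb)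
    have k3 := key τ (b + c) (by omega) hτ α hαne hαpos
    have base := rib_mul_h α hαne hαpos hb
    have i1 : (α ++ [b]) ++ c :: τ = α ++ b :: c :: τ := by simp
    have i2 : mend (α ++ [b]) c ++ τ = α ++ (b + c) :: τ := by
      rw [mend_concat]; simp
    have i3 : mend (mend α b) c = mend α (b + c) := mend_mend hαne b c
    rw [e0, mul_sub, ← mul_assoc, base, add_mul, k1, k2, k3, i1, i2, i3]
    abel

/-- Ribbon multiplication: r_α · r_β = r_{α·β} + r_{α⊙β} (concatenation and near-concatenation). -/
theorem stmt5 (α β : List ℕ) (hα : ∀ x ∈ α, 0 < x) (hβ : ∀ x ∈ β, 0 < x)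
    (hαne : α ≠ []) (hβne : β ≠ []) :
    rib α * rib β =
      rib (α ++ β) + rib (α.dropLast ++ (α.getLast hαne + β.head hβne) :: β.tail) := by
  cases β with
  | nil => exact absurd rfl hβne
  | cons b β' =>
    have hb : 0 < b := hβ b (by simp)
    have hβ' : ∀ x ∈ β', 0 < x := fun x hx => hβ x (by simp [hx])
    have hk := key β' b hb hβ' α hαne hα
    have e : mend α b ++ β' = α.dropLast ++ (α.getLast hαne + b) :: β' := by
      rw [mend_eq α hαne b, List.append_assoc]
      rfl
    rw [e] at hk
    simpa using hk
end

section
/- With ψ_n = ∑_{β ⊨ n} (−1)^{1+ℓ(β)} β_{ℓ(β)} h_β in the free associative algebra NSym on h_1, h_2, …, and ψ_α = ψ_{α_1}⋯ψ_{α_k} for a composition α, one has for every n ≥ 0: h_n = ∑_{β ⊨ n} (1/π_u(β)) ψ_β, where π_u(β) = ∏_{i=1}^{ℓ(β)} (β_1 + β_2 + ⋯ + β_i) is the product of partial sums of β. -/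
noncomputable def psi (k : ℕ) : FreeAlgebra ℚ ℕ :=
  ∑ β ∈ comps k, (((-1 : ℚ) ^ (1 + β.length)) * (β.getLastD 0 : ℚ)) • hC β

noncomputable def psiC (β : List ℕ) : FreeAlgebra ℚ ℕ := (β.map psi).prod

/-- Product of partial sums π_u(β). -/
noncomputable def piu (β : List ℕ) : ℚ :=
  ∏ i ∈ Finset.range β.length, ((β.take (i + 1)).sum : ℚ)

/-! ### Auxiliary lemmas -/

noncomputable def cc (β : List ℕ) : ℚ := ((-1 : ℚ) ^ (1 + β.length)) * (β.getLastD 0 : ℚ)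

lemma psi_eq (k : ℕ) : psi k = ∑ β ∈ comps k, cc β • hC β := rfl

lemma comps_zero : comps 0 = {[]} := by
  ext l
  simp only [mem_comps, Finset.mem_singleton]
  constructor
  · rintro ⟨h1, h2⟩
    cases l with
    | nil => rfl
    | cons a l =>
      exfalso
      have ha : a = 0 := List.sum_eq_zero_iff.mp h2 a List.mem_cons_self
      have := h1 a List.mem_cons_self
      omega
  · rintro rfl; exact ⟨by simp, rfl⟩

lemma hC_cons (i : ℕ) (β : List ℕ) : hC (i :: β) = h i * hC β := by
  simp [hC]

lemma psiC_concat (β : List ℕ) (k : ℕ) : psiC (β ++ [k]) = psiC β * psi k := by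
  simp [psiC]

lemma piu_concat (β : List ℕ) (k : ℕ) :
    piu (β ++ [k]) = piu β * ((β.sum + k : ℕ) : ℚ) := by
  unfold piu
  rw [List.length_append, List.length_singleton, Finset.prod_range_succ]
  congr 1
  · apply Finset.prod_congr rfl
    intro i hi
    rw [Finset.mem_range] at hi
    rw [List.take_append_of_le_length (by omega)]
  · rw [List.take_of_length_le (by simp), List.sum_append]
    push_cast
    simp

lemma getLastD_of_ne_nil {l : List ℕ} (hl : l ≠ []) (d d' : ℕ) :
    l.getLastD d = l.getLastD d' := by
  rw [List.getLastD_eq_getLast?, List.getLastD_eq_getLast?]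
  obtain ⟨x, hx⟩ := Option.isSome_iff_exists.mp (List.getLast?_isSome.mpr hl)
  rw [hx]; rfl

lemma cc_cons (i : ℕ) {β : List ℕ} (hβ : β ≠ []) : cc (i :: β) = -cc β := by
  unfold cc
  rw [List.getLastD_cons, getLastD_of_ne_nil hβ i 0, List.length_cons,
    show 1 + (β.length + 1) = (1 + β.length) + 1 by omega, pow_succ]
  ring

/-- The generating recurrence: `∑_{i<n} h_i ψ_{n-i} = n h_n`. -/
lemma recurrence (n : ℕ) (hn : 0 < n) :
    ∑ i ∈ Finset.range n, h i * psi (n - i) = (n : ℚ) • h n := by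
  have hsplit : Finset.range n = insert 0 (Finset.Ico 1 n) := by
    ext i; simp [Finset.mem_Ico]; omega
  rw [hsplit, Finset.sum_insert (by simp)]
  have h0 : h 0 * psi (n - 0) = psi n := by simp [h]
  rw [h0]
  have hterm : ∀ i ∈ Finset.Ico 1 n,
      h i * psi (n - i) = ∑ β ∈ comps (n - i), cc β • hC (i :: β) := by
    intro i _
    rw [psi_eq, Finset.mul_sum]
    exact Finset.sum_congr rfl fun β _ => by rw [mul_smul_comm, hC_cons]
  rw [Finset.sum_congr rfl hterm, Finset.sum_sigma']
  have hbij : ∑ p ∈ (Finset.Ico 1 n).sigma (fun i => comps (n - i)),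
      cc p.2 • hC (p.1 :: p.2)
      = ∑ γ ∈ (comps n).erase [n], (-(cc γ)) • hC γ := by
    apply Finset.sum_bij' (i := fun p _ => p.1 :: p.2)
      (j := fun γ _ => (⟨γ.headI, γ.tail⟩ : Σ _ : ℕ, List ℕ))
    · rintro ⟨i, β⟩ hp
      simp only [Finset.mem_sigma, Finset.mem_Ico] at hp
      obtain ⟨⟨hi1, hi2⟩, hβ⟩ := hp
      obtain ⟨hpos, hsum⟩ := mem_comps.mp hβ
      have hβne : β ≠ [] := by rintro rfl; simp at hsum; omega
      rw [Finset.mem_erase, mem_comps]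
      refine ⟨?_, ?_, ?_⟩
      · intro hcontra
        rw [List.cons_eq_cons] at hcontra
        exact hβne hcontra.2
      · intro x hx
        rcases List.mem_cons.mp hx with rfl | hx
        · omega
        · exact hpos x hx
      · simp only [List.sum_cons, hsum]; omega
    · intro γ hγ
      rw [Finset.mem_erase] at hγ
      obtain ⟨hne, hγ⟩ := hγ
      obtain ⟨hpos, hsum⟩ := mem_comps.mp hγ
      have hγne : γ ≠ [] := by rintro rfl; simp at hsum; omega
      obtain ⟨a, l, rfl⟩ := List.exists_cons_of_ne_nil hγne
      have hlne : l ≠ [] := by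
        rintro rfl
        simp only [List.sum_cons, List.sum_nil, add_zero] at hsum
        exact hne (by rw [hsum])
      simp only [Finset.mem_sigma, Finset.mem_Ico, List.headI, List.tail_cons]
      have hlsum : 0 < l.sum := by
        obtain ⟨b, m, rfl⟩ := List.exists_cons_of_ne_nil hlne
        have := hpos b (by simp)
        simp only [List.sum_cons]; omega
      have hapos := hpos a (by simp)
      simp only [List.sum_cons] at hsum
      exact ⟨⟨hapos, by omega⟩,
        mem_comps.mpr ⟨fun x hx => hpos x (by simp [hx]), by omega⟩⟩
    · rintro ⟨i, β⟩ _; rfl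
    · intro γ hγ
      rw [Finset.mem_erase] at hγ
      obtain ⟨hne, hγ⟩ := hγ
      obtain ⟨hpos, hsum⟩ := mem_comps.mp hγ
      have hγne : γ ≠ [] := by rintro rfl; simp at hsum; omega
      obtain ⟨a, l, rfl⟩ := List.exists_cons_of_ne_nil hγne
      rfl
    · rintro ⟨i, β⟩ hp
      simp only [Finset.mem_sigma, Finset.mem_Ico] at hp
      obtain ⟨⟨hi1, hi2⟩, hβ⟩ := hp
      obtain ⟨hpos, hsum⟩ := mem_comps.mp hβ
      have hβne : β ≠ [] := by rintro rfl; simp at hsum; omega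
      rw [cc_cons i hβne, neg_neg]
  rw [hbij]
  have hmem : [n] ∈ comps n := mem_comps.mpr ⟨by simpa using hn, by simp⟩
  have hsum := Finset.add_sum_erase (comps n) (fun γ => cc γ • hC γ) hmem
  rw [psi_eq, ← hsum]
  simp only [neg_smul, Finset.sum_neg_distrib]
  rw [add_neg_cancel_right]
  have hcc : cc [n] = (n : ℚ) := by simp [cc]
  have hhC : hC [n] = h n := by simp [hC]
  rw [hcc, hhC]

/-- h_n = ∑_{β ⊨ n} ψ_β / π_u(β). -/
theorem stmt8 (n : ℕ) :
    h n = ∑ β ∈ comps n, (piu β)⁻¹ • psiC β := by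
  induction n using Nat.strong_induction_on with
  | _ n ih =>
  rcases Nat.eq_zero_or_pos n with rfl | hn
  · rw [comps_zero]
    simp [piu, psiC, h]
  · have hne : (n : ℚ) ≠ 0 := Nat.cast_ne_zero.mpr hn.ne'
    have key : (n : ℚ) • h n = (n : ℚ) • ∑ β ∈ comps n, (piu β)⁻¹ • psiC β := by
      rw [← recurrence n hn, Finset.smul_sum]
      have hterm : ∀ i ∈ Finset.range n,
          h i * psi (n - i) = ∑ β ∈ comps i, (piu β)⁻¹ • psiC (β ++ [n - i]) := by
        intro i hi
        rw [ih i (Finset.mem_range.mp hi), Finset.sum_mul]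
        exact Finset.sum_congr rfl fun β _ => by rw [smul_mul_assoc, psiC_concat]
      rw [Finset.sum_congr rfl hterm, Finset.sum_sigma']
      apply Finset.sum_bij' (i := fun p _ => p.2 ++ [n - p.1])
        (j := fun γ _ => (⟨γ.dropLast.sum, γ.dropLast⟩ : Σ _ : ℕ, List ℕ))
      · rintro ⟨i, β⟩ hp
        simp only [Finset.mem_sigma, Finset.mem_range] at hp
        obtain ⟨hi, hβ⟩ := hp
        obtain ⟨hpos, hsum⟩ := mem_comps.mp hβ
        refine mem_comps.mpr ⟨?_, ?_⟩
        · intro x hx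
          rcases List.mem_append.mp hx with hx | hx
          · exact hpos x hx
          · simp only [List.mem_singleton] at hx; omega
        · rw [List.sum_append, hsum]; simp; omega
      · intro γ hγ
        obtain ⟨hpos, hsum⟩ := mem_comps.mp hγ
        have hγne : γ ≠ [] := by rintro rfl; simp at hsum; omega
        have hdec : γ.dropLast ++ [γ.getLast hγne] = γ := List.dropLast_append_getLast hγne
        have hlast : 0 < γ.getLast hγne := hpos _ (List.getLast_mem hγne)
        have hds : γ.dropLast.sum + γ.getLast hγne = n := by
          rw [← hsum]; conv_rhs => rw [← hdec]
          rw [List.sum_append]; simp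
        simp only [Finset.mem_sigma, Finset.mem_range]
        refine ⟨by omega, mem_comps.mpr ⟨fun x hx => hpos x ?_, rfl⟩⟩
        rw [← hdec]; exact List.mem_append_left _ hx
      · rintro ⟨i, β⟩ hp
        simp only [Finset.mem_sigma, Finset.mem_range] at hp
        obtain ⟨hi, hβ⟩ := hp
        obtain ⟨hpos, hsum⟩ := mem_comps.mp hβ
        have hd : (β ++ [n - i]).dropLast = β := List.dropLast_concat
        simp only [hd, hsum]
      · intro γ hγ
        obtain ⟨hpos, hsum⟩ := mem_comps.mp hγ
        have hγne : γ ≠ [] := by rintro rfl; simp at hsum; omega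
        have hdec : γ.dropLast ++ [γ.getLast hγne] = γ := List.dropLast_append_getLast hγne
        have hds : γ.dropLast.sum + γ.getLast hγne = n := by
          rw [← hsum]; conv_rhs => rw [← hdec]
          rw [List.sum_append]; simp
        have : n - γ.dropLast.sum = γ.getLast hγne := by omega
        rw [this, hdec]
      · rintro ⟨i, β⟩ hp
        simp only [Finset.mem_sigma, Finset.mem_range] at hp
        obtain ⟨hi, hβ⟩ := hp
        obtain ⟨hpos, hsum⟩ := mem_comps.mp hβ
        rw [piu_concat, hsum, show i + (n - i) = n by omega, smul_smul, mul_inv,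
          ← mul_assoc, mul_comm (n : ℚ), mul_assoc, mul_inv_cancel₀ hne, mul_one]
    exact smul_right_injective _ hne key
end

section
/- Define in the free associative algebra NSym on generators h_1, h_2, …, for n ≥ 1, φ_n = ∑_{β ⊨ n} (−1)^{ℓ(β)+1} (n/ℓ(β)) h_β. Then h_n = ∑_{β ⊨ n} (1/(ℓ(β)! · β_1 β_2 ⋯ β_{ℓ(β)})) φ_β for all n ≥ 0, where φ_β = φ_{β_1}⋯φ_{β_{ℓ(β)}}. -/
noncomputable def phi (k : ℕ) : FreeAlgebra ℚ ℕ :=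
  ∑ β ∈ comps k, (((-1 : ℚ) ^ (β.length + 1)) * ((k : ℚ) / (β.length : ℚ))) • hC β

noncomputable def phiC (β : List ℕ) : FreeAlgebra ℚ ℕ := (β.map phi).prod

lemma comps_one : comps 1 = {[1]} := by
  ext l
  simp only [mem_comps, Finset.mem_singleton]
  constructor
  · rintro ⟨h1, h2⟩
    cases l with
    | nil => simp at h2
    | cons a t =>
      simp only [List.sum_cons] at h2
      have ha := h1 a (by simp)
      have ht : t = [] := by
        cases t with
        | nil => rfl
        | cons b u => have := h1 b (by simp); simp [List.sum_cons] at h2; omega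
      subst ht; simp at h2 ⊢; omega
  · rintro rfl; exact ⟨by simp +contextual, rfl⟩

lemma singleton_mem_comps {n : ℕ} (hn : 1 ≤ n) : [n] ∈ comps n := by
  rw [mem_comps]; constructor
  · intro x hx; simp at hx; omega
  · simp

/-! ### Facts about `hC` -/

lemma hC_nil : hC [] = 1 := rfl

lemma hC_append (l1 l2 : List ℕ) : hC (l1 ++ l2) = hC l1 * hC l2 := by
  simp [hC, List.map_append, List.prod_append]

/-! ### The scalar weight `w` and its generating sum `G` -/

noncomputable def w (α : List ℕ) : ℚ :=
  (-1 : ℚ) ^ α.length * ((α.length.factorial : ℚ) * (α.map (fun b : ℕ => (b : ℚ))).prod)⁻¹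

noncomputable def G (m : ℕ) : ℚ := ∑ α ∈ comps m, w α

lemma w_perm {α α' : List ℕ} (hp : α.Perm α') : w α = w α' := by
  have h2 := List.Perm.prod_eq (List.Perm.map (fun b : ℕ => (b : ℚ)) hp)
  rw [w, w, hp.length_eq, h2]

lemma sum_getD (α : List ℕ) : ∑ i ∈ Finset.range α.length, α.getD i 0 = α.sum := by
  induction α with
  | nil => simp
  | cons a t ih =>
    rw [List.length_cons, Finset.sum_range_succ']
    simp only [List.getD_cons_succ, List.getD_cons_zero, List.sum_cons, ih]
    omega

lemma headD_eq_getD (l : List ℕ) : l.headD 0 = l.getD 0 0 := by cases l <;> rfl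

lemma sum_comps_succ {m : ℕ} (hm : 1 ≤ m) (F : List ℕ → ℚ) :
    ∑ α ∈ comps m, F α = ∑ j ∈ Finset.Icc 1 m, ∑ γ ∈ comps (m - j), F (j :: γ) := by
  rw [Finset.sum_sigma']
  refine Finset.sum_nbij' (fun α => ⟨α.headD 0, α.tail⟩) (fun p => p.1 :: p.2) ?_ ?_ ?_ ?_ ?_
  · intro α hα
    rw [mem_comps] at hα
    obtain ⟨h1, h2⟩ := hα
    cases α with
    | nil => simp at h2; omega
    | cons a t =>
      simp only [List.headD_cons, List.tail_cons, Finset.mem_sigma, Finset.mem_Icc, mem_comps]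
      have ha := h1 a (by simp)
      simp only [List.sum_cons] at h2
      exact ⟨⟨ha, by omega⟩, fun x hx => h1 x (by simp [hx]), by omega⟩
  · rintro ⟨j, γ⟩ hp
    simp only [Finset.mem_sigma, Finset.mem_Icc, mem_comps] at hp
    obtain ⟨⟨hj1, hj2⟩, hγ1, hγ2⟩ := hp
    rw [mem_comps]
    constructor
    · intro x hx
      rcases List.mem_cons.mp hx with rfl | hx
      · omega
      · exact hγ1 x hx
    · simp [hγ2]; omega
  · intro α hα
    rw [mem_comps] at hα
    cases α with
    | nil => exfalso; have := hα.2; simp at this; omega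
    | cons a t => rfl
  · rintro ⟨j, γ⟩ _; rfl
  · intro α hα
    rw [mem_comps] at hα
    cases α with
    | nil => exfalso; have := hα.2; simp at this; omega
    | cons a t => rfl

lemma rot_sum (m : ℕ) (F : List ℕ → ℚ) (hF : ∀ α α', α.Perm α' → F α = F α') :
    ∑ α ∈ comps m, ∑ i ∈ Finset.range α.length, ((α.getD i 0 : ℚ)) * F α
      = ∑ α ∈ comps m, ∑ i ∈ Finset.range α.length, ((α.headD 0 : ℚ)) * F α := by
  rw [Finset.sum_sigma', Finset.sum_sigma']
  refine Finset.sum_nbij' (fun p => ⟨p.1.rotate p.2, p.2⟩)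
    (fun p => ⟨p.1.rotate (p.1.length - p.2), p.2⟩) ?_ ?_ ?_ ?_ ?_
  · rintro ⟨α, i⟩ hp
    simp only [Finset.mem_sigma, Finset.mem_range, List.length_rotate] at hp ⊢
    refine ⟨?_, hp.2⟩
    rw [mem_comps] at hp ⊢
    obtain ⟨⟨h1, h2⟩, _⟩ := hp
    exact ⟨fun x hx => h1 x ((α.rotate_perm i).mem_iff.mp hx),
      by rw [(α.rotate_perm i).sum_eq, h2]⟩
  · rintro ⟨α, i⟩ hp
    simp only [Finset.mem_sigma, Finset.mem_range, List.length_rotate] at hp ⊢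
    refine ⟨?_, hp.2⟩
    rw [mem_comps] at hp ⊢
    obtain ⟨⟨h1, h2⟩, _⟩ := hp
    exact ⟨fun x hx => h1 x ((α.rotate_perm _).mem_iff.mp hx),
      by rw [(α.rotate_perm _).sum_eq, h2]⟩
  · rintro ⟨α, i⟩ hp
    simp only [Finset.mem_sigma, Finset.mem_range] at hp
    have hi : i ≤ α.length := le_of_lt hp.2
    simp only [Sigma.mk.inj_iff, heq_eq_eq, and_true]
    rw [List.length_rotate, List.rotate_rotate, Nat.add_sub_cancel' hi, List.rotate_length]
  · rintro ⟨α, i⟩ hp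
    simp only [Finset.mem_sigma, Finset.mem_range] at hp
    simp only [Sigma.mk.inj_iff, heq_eq_eq, and_true]
    rw [List.rotate_rotate, Nat.sub_add_cancel (le_of_lt hp.2), List.rotate_length]
  · rintro ⟨α, i⟩ hp
    simp only [Finset.mem_sigma, Finset.mem_range] at hp
    have hlen : 0 < (α.rotate i).length := by rw [List.length_rotate]; omega
    have h0 : (α.rotate i).headD 0 = α.getD i 0 := by
      rw [headD_eq_getD]
      rw [List.getD_eq_getElem _ _ hlen, List.getD_eq_getElem _ _ hp.2]
      rw [List.getElem_rotate]
      congr 1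
      simp [Nat.mod_eq_of_lt hp.2]
    rw [h0, hF _ _ (α.rotate_perm i)]

lemma list_prod_cast_ne_zero {γ : List ℕ} (hγ : ∀ x ∈ γ, 0 < x) :
    (γ.map (fun b : ℕ => (b : ℚ))).prod ≠ 0 := by
  induction γ with
  | nil => simp
  | cons a t ih =>
    simp only [List.map_cons, List.prod_cons]
    have ha : (a : ℚ) ≠ 0 := by
      have := hγ a (by simp); positivity
    exact mul_ne_zero ha (ih fun x hx => hγ x (by simp [hx]))

lemma cons_w {j : ℕ} (hj : 1 ≤ j) {γ : List ℕ} (hγ : ∀ x ∈ γ, 0 < x) :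
    ((γ.length : ℚ) + 1) * (j : ℚ) * w (j :: γ) = - w γ := by
  have hP := list_prod_cast_ne_zero hγ
  have hj' : (j : ℚ) ≠ 0 := by positivity
  have hf : ((γ.length.factorial : ℚ)) ≠ 0 := by
    exact_mod_cast Nat.cast_ne_zero.mpr (Nat.factorial_ne_zero _)
  rw [w, w]
  simp only [List.length_cons, List.map_cons, List.prod_cons, Nat.factorial_succ,
    Nat.cast_mul, Nat.cast_add, Nat.cast_one, pow_succ]
  field_simp

lemma sum_Icc_G (m : ℕ) : ∑ j ∈ Finset.Icc 1 m, G (m - j) = ∑ r ∈ Finset.range m, G r := by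
  refine Finset.sum_nbij' (fun j => m - j) (fun r => m - r) ?_ ?_ ?_ ?_ ?_
  · intro j hj; simp only [Finset.mem_Icc] at hj; simp only [Finset.mem_range]; omega
  · intro r hr; simp only [Finset.mem_range] at hr; simp only [Finset.mem_Icc]; omega
  · intro j hj; simp only [Finset.mem_Icc] at hj; omega
  · intro r hr; simp only [Finset.mem_range] at hr; omega
  · intro j _; rfl

lemma G_rec {m : ℕ} (hm : 1 ≤ m) : (m : ℚ) * G m = - ∑ r ∈ Finset.range m, G r := by
  have step1 : (m : ℚ) * G m = ∑ α ∈ comps m, ∑ i ∈ Finset.range α.length,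
      ((α.getD i 0 : ℚ)) * w α := by
    rw [G, Finset.mul_sum]
    refine Finset.sum_congr rfl fun α hα => ?_
    rw [mem_comps] at hα
    have : (m : ℚ) = ∑ i ∈ Finset.range α.length, (α.getD i 0 : ℚ) := by
      rw [← Nat.cast_sum]
      rw [sum_getD, hα.2]
    rw [this, Finset.sum_mul]
  rw [step1, rot_sum m w (fun _ _ hp => w_perm hp)]
  have step2 : ∑ α ∈ comps m, ∑ _i ∈ Finset.range α.length, ((α.headD 0 : ℚ)) * w α
      = ∑ α ∈ comps m, (α.length : ℚ) * ((α.headD 0 : ℚ) * w α) := by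
    refine Finset.sum_congr rfl fun α _ => ?_
    rw [Finset.sum_const, Finset.card_range, nsmul_eq_mul]
  rw [step2, sum_comps_succ hm (fun α => (α.length : ℚ) * ((α.headD 0 : ℚ) * w α))]
  have step3 : ∀ j ∈ Finset.Icc 1 m, ∑ γ ∈ comps (m - j),
      (((j :: γ).length : ℚ) * (((j :: γ).headD 0 : ℚ) * w (j :: γ))) = - G (m - j) := by
    intro j hj
    simp only [Finset.mem_Icc] at hj
    rw [G, ← Finset.sum_neg_distrib]
    refine Finset.sum_congr rfl fun γ hγ => ?_
    rw [mem_comps] at hγ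
    have := cons_w hj.1 hγ.1
    simp only [List.length_cons, List.headD_cons]
    push_cast
    rw [← this]; ring
  rw [Finset.sum_congr rfl step3, Finset.sum_neg_distrib, sum_Icc_G]

lemma G_zero : G 0 = 1 := by
  rw [G, comps_zero]
  simp [w]

lemma G_one : G 1 = -1 := by
  rw [G, comps_one]
  simp [w]

lemma G_ge_two {m : ℕ} (hm : 2 ≤ m) : G m = 0 := by
  induction m using Nat.strong_induction_on with
  | _ m ih =>
    have hm1 : 1 ≤ m := by omega
    have hrec := G_rec hm1
    have hsum : ∑ r ∈ Finset.range m, G r = 0 := by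
      have hsplit : Finset.range m = Finset.Ico 0 2 ∪ Finset.Ico 2 m := by
        rw [Finset.range_eq_Ico, ← Finset.Ico_union_Ico_eq_Ico (Nat.zero_le 2) hm]
      rw [hsplit, Finset.sum_union]
      · have h1 : ∑ r ∈ Finset.Ico 0 2, G r = 0 := by
          rw [← Finset.range_eq_Ico, Finset.sum_range_succ, Finset.sum_range_one, G_zero, G_one]
          ring
        have h2 : ∑ r ∈ Finset.Ico 2 m, G r = 0 := by
          refine Finset.sum_eq_zero fun r hr => ?_
          simp only [Finset.mem_Ico] at hr
          exact ih r hr.2 hr.1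
        rw [h1, h2]; ring
      · exact Finset.Ico_disjoint_Ico_consecutive 0 2 m
    rw [hsum, neg_zero] at hrec
    have hm0 : (m : ℚ) ≠ 0 := by positivity
    exact (mul_eq_zero.mp hrec).resolve_left hm0

/-! ### Expansion of `phiC` over choices of refinements -/

noncomputable def wA (γ : List ℕ) : ℚ :=
  ((-1 : ℚ) ^ (γ.length + 1)) * ((γ.sum : ℚ) / (γ.length : ℚ))

lemma phi_eq (b : ℕ) : phi b = ∑ γ ∈ comps b, wA γ • hC γ := by
  refine Finset.sum_congr rfl fun γ hγ => ?_
  rw [mem_comps] at hγ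
  rw [wA, hγ.2]

noncomputable def choices : List ℕ → Finset (List (List ℕ))
  | [] => {[]}
  | b :: β => ((comps b) ×ˢ choices β).image fun p => p.1 :: p.2

lemma mem_choices_nil {δs : List (List ℕ)} : δs ∈ choices [] ↔ δs = [] := by
  simp [choices]

lemma mem_choices_cons {b : ℕ} {β : List ℕ} {δs : List (List ℕ)} :
    δs ∈ choices (b :: β) ↔ ∃ γ ∈ comps b, ∃ ds ∈ choices β, δs = γ :: ds := by
  simp only [choices, Finset.mem_image, Finset.mem_product, Prod.exists]
  constructor
  · rintro ⟨γ, ds, ⟨h1, h2⟩, rfl⟩; exact ⟨γ, h1, ds, h2, rfl⟩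
  · rintro ⟨γ, h1, ds, h2, rfl⟩; exact ⟨γ, ds, ⟨h1, h2⟩, rfl⟩

lemma map_sum_of_mem_choices : ∀ {β : List ℕ} {δs : List (List ℕ)}, δs ∈ choices β →
    δs.map List.sum = β := by
  intro β
  induction β with
  | nil => intro δs hδ; rw [mem_choices_nil] at hδ; simp [hδ]
  | cons b β ih =>
    intro δs hδ
    rw [mem_choices_cons] at hδ
    obtain ⟨γ, h1, ds, h2, rfl⟩ := hδ
    rw [mem_comps] at h1
    simp [h1.2, ih h2]

lemma phiC_eq (β : List ℕ) :
    phiC β = ∑ δs ∈ choices β, ((δs.map wA).prod) • hC δs.flatten := by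
  induction β with
  | nil =>
    simp [phiC, choices, hC_nil]
  | cons b β ih =>
    have : phiC (b :: β) = phi b * phiC β := by simp [phiC]
    rw [this, ih, phi_eq]
    rw [Finset.sum_mul_sum]
    rw [choices]
    rw [Finset.sum_image]
    · rw [Finset.sum_product]
      refine Finset.sum_congr rfl fun γ hγ => ?_
      refine Finset.sum_congr rfl fun ds hds => ?_
      rw [smul_mul_smul_comm, ← hC_append]
      simp [List.flatten]
    · rintro ⟨a1, a2⟩ - ⟨b1, b2⟩ - hab
      simpa using hab

lemma choices_forall : ∀ {β : List ℕ}, (∀ b ∈ β, 0 < b) → ∀ {δs : List (List ℕ)},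
    δs ∈ choices β → ∀ γ ∈ δs, (∀ x ∈ γ, 0 < x) ∧ 0 < γ.length ∧ 0 < γ.sum := by
  intro β
  induction β with
  | nil =>
    intro _ δs hδs
    rw [mem_choices_nil] at hδs
    subst hδs
    intro γ hγ; simp at hγ
  | cons b β ih =>
    intro hβ δs hδs
    rw [mem_choices_cons] at hδs
    obtain ⟨γ0, hγ0, ds, hds, rfl⟩ := hδs
    intro γ hγ
    rcases List.mem_cons.mp hγ with rfl | hγ
    · rw [mem_comps] at hγ0
      have hb : 0 < b := hβ b (by simp)
      have hγsum : 0 < γ.sum := by rw [hγ0.2]; exact hb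
      refine ⟨hγ0.1, ?_, hγsum⟩
      cases γ with
      | nil => simp at hγsum
      | cons _ _ => simp
    · exact ih (fun x hx => hβ x (by simp [hx])) hds γ hγ

lemma mem_choices_of_forall : ∀ (δs : List (List ℕ)),
    (∀ γ ∈ δs, (∀ x ∈ γ, 0 < x)) → δs ∈ choices (δs.map List.sum) := by
  intro δs
  induction δs with
  | nil => simp [mem_choices_nil]
  | cons γ ds ih =>
    intro hall
    simp only [List.map_cons]
    rw [mem_choices_cons]
    exact ⟨γ, mem_comps.mpr ⟨hall γ (by simp), rfl⟩,
      ds, ih (fun γ' hγ' => hall γ' (by simp [hγ'])), rfl⟩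

/-! ### Splitting a composition along another composition -/

def split : List ℕ → List ℕ → List (List ℕ)
  | _, [] => []
  | δ, a :: α => δ.take a :: split (δ.drop a) α

lemma split_flatten : ∀ (δs : List (List ℕ)), split δs.flatten (δs.map List.length) = δs := by
  intro δs
  induction δs with
  | nil => rfl
  | cons γ ds ih =>
    simp only [List.flatten_cons, List.map_cons, split]
    rw [List.take_left, List.drop_left, ih]

lemma flatten_split : ∀ (α δ : List ℕ), α.sum = δ.length → (split δ α).flatten = δ := by
  intro α
  induction α with
  | nil => intro δ hδ; simp at hδ; simp [split, List.eq_nil_of_length_eq_zero hδ.symm]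
  | cons a α ih =>
    intro δ hδ
    simp only [List.sum_cons] at hδ
    simp only [split, List.flatten_cons]
    rw [ih (δ.drop a) (by rw [List.length_drop]; omega), List.take_append_drop]

lemma map_length_split : ∀ (α δ : List ℕ), α.sum ≤ δ.length →
    (split δ α).map List.length = α := by
  intro α
  induction α with
  | nil => intro δ _; rfl
  | cons a α ih =>
    intro δ hδ
    simp only [List.sum_cons] at hδ
    simp only [split, List.map_cons]
    rw [List.length_take, ih (δ.drop a) (by rw [List.length_drop]; omega)]
    congr 1
    omega

lemma mem_of_mem_split : ∀ (α δ : List ℕ) (γ : List ℕ), γ ∈ split δ α → ∀ x ∈ γ, x ∈ δ := by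
  intro α
  induction α with
  | nil => intro δ γ hγ; simp [split] at hγ
  | cons a α ih =>
    intro δ γ hγ x hx
    simp only [split, List.mem_cons] at hγ
    rcases hγ with rfl | hγ
    · exact List.take_subset a δ hx
    · exact List.drop_subset a δ (ih (δ.drop a) γ hγ x hx)

/-! ### The combined weights -/

noncomputable def Fd (δs : List (List ℕ)) : ℚ :=
  ((δs.length.factorial : ℚ))⁻¹ *
    (δs.map (fun γ => (-1 : ℚ) ^ (γ.length + 1) * ((γ.length : ℚ))⁻¹)).prod

noncomputable def F2 (α : List ℕ) : ℚ :=
  ((α.length.factorial : ℚ))⁻¹ *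
    (α.map (fun a : ℕ => (-1 : ℚ) ^ (a + 1) * ((a : ℚ))⁻¹)).prod

lemma sign_prod (α : List ℕ) :
    (α.map (fun a : ℕ => (-1 : ℚ) ^ (a + 1))).prod = (-1 : ℚ) ^ (α.sum + α.length) := by
  induction α with
  | nil => simp
  | cons a t ih =>
    simp only [List.map_cons, List.prod_cons, List.sum_cons, List.length_cons, ih, ← pow_add]
    congr 1
    omega

lemma inv_prod (α : List ℕ) :
    (α.map (fun a : ℕ => ((a : ℚ))⁻¹)).prod = ((α.map (fun a : ℕ => (a : ℚ))).prod)⁻¹ := by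
  induction α with
  | nil => simp
  | cons a t ih => simp only [List.map_cons, List.prod_cons, ih, mul_inv]

lemma F2_eq_w (α : List ℕ) : F2 α = (-1 : ℚ) ^ α.sum * w α := by
  rw [F2, w]
  have : (α.map (fun a : ℕ => (-1 : ℚ) ^ (a + 1) * ((a : ℚ))⁻¹)).prod
      = (α.map (fun a : ℕ => (-1 : ℚ) ^ (a + 1))).prod * (α.map (fun a : ℕ => ((a : ℚ))⁻¹)).prod := by
    rw [← List.prod_map_mul]
  rw [this, sign_prod, inv_prod, mul_inv, pow_add]
  ring

lemma Fd_split {α δ : List ℕ} (hsum : α.sum = δ.length) : Fd (split δ α) = F2 α := by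
  have hml := map_length_split α δ (le_of_eq hsum)
  rw [Fd, F2]
  conv_rhs => rw [← hml]
  simp only [List.length_map, List.map_map, Function.comp]
  rfl

lemma coeff_simp {δs : List (List ℕ)} (hpos : ∀ γ ∈ δs, 0 < γ.sum) :
    ((((δs.map List.sum).length.factorial : ℚ)) *
        ((δs.map List.sum).map (fun b : ℕ => (b : ℚ))).prod)⁻¹ * (δs.map wA).prod = Fd δs := by
  have hS : ((δs.map List.sum).map (fun b : ℕ => (b : ℚ))).prod ≠ 0 := by
    refine list_prod_cast_ne_zero fun x hx => ?_
    obtain ⟨γ, hγ, rfl⟩ := List.mem_map.mp hx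
    exact hpos γ hγ
  have hW : δs.map wA = δs.map (fun γ => ((γ.sum : ℚ)) *
      ((-1 : ℚ) ^ (γ.length + 1) * ((γ.length : ℚ))⁻¹)) := by
    refine List.map_congr_left fun γ _ => ?_
    rw [wA, div_eq_mul_inv]
    ring
  have hWW : (δs.map wA).prod = ((δs.map List.sum).map (fun b : ℕ => (b : ℚ))).prod *
      (δs.map (fun γ => (-1 : ℚ) ^ (γ.length + 1) * ((γ.length : ℚ))⁻¹)).prod := by
    rw [hW, List.map_map]
    rw [← List.prod_map_mul]
    rfl
  have hf : (((δs.map List.sum).length.factorial : ℚ)) ≠ 0 := by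
    exact_mod_cast Nat.cast_ne_zero.mpr (Nat.factorial_ne_zero _)
  rw [hWW, Fd, List.length_map, mul_inv]
  rw [mul_assoc, ← mul_assoc (((δs.map List.sum).map (fun b : ℕ => (b : ℚ))).prod)⁻¹,
    inv_mul_cancel₀ hS, one_mul]

/-! ### The main reindexing -/

lemma list_sum_pos {γ : List ℕ} (hlen : 0 < γ.length) (hpos : ∀ x ∈ γ, 0 < x) :
    0 < γ.sum := by
  cases γ with
  | nil => simp at hlen
  | cons a t =>
    simp only [List.sum_cons]
    have := hpos a (by simp)
    omega

lemma reindex (n : ℕ) :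
    ∑ p ∈ (comps n).sigma (fun β => choices β), (Fd p.2) • hC p.2.flatten
      = ∑ p ∈ (comps n).sigma (fun δ => comps δ.length), (Fd (split p.1 p.2)) • hC p.1 := by
  refine Finset.sum_nbij' (fun p => ⟨p.2.flatten, p.2.map List.length⟩)
      (fun p => ⟨(split p.1 p.2).map List.sum, split p.1 p.2⟩) ?_ ?_ ?_ ?_ ?_
  · rintro ⟨β, δs⟩ hp
    simp only [Finset.mem_sigma] at hp ⊢
    obtain ⟨hβ, hδs⟩ := hp
    have hβc := mem_comps.mp hβ
    have hall := choices_forall hβc.1 hδs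
    constructor
    · rw [mem_comps]
      constructor
      · intro x hx
        obtain ⟨γ, hγ, hxγ⟩ := List.mem_flatten.mp hx
        exact (hall γ hγ).1 x hxγ
      · rw [List.sum_flatten, map_sum_of_mem_choices hδs, hβc.2]
    · rw [mem_comps]
      constructor
      · intro x hx
        obtain ⟨γ, hγ, rfl⟩ := List.mem_map.mp hx
        exact (hall γ hγ).2.1
      · rw [List.length_flatten]
  · rintro ⟨δ, α⟩ hp
    simp only [Finset.mem_sigma] at hp ⊢
    obtain ⟨hδ, hα⟩ := hp
    have hδc := mem_comps.mp hδ
    have hαc := mem_comps.mp hα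
    have hml := map_length_split α δ (le_of_eq hαc.2)
    have hchunk : ∀ γ ∈ split δ α, (∀ x ∈ γ, 0 < x) ∧ 0 < γ.length := by
      intro γ hγ
      constructor
      · exact fun x hx => hδc.1 x (mem_of_mem_split α δ γ hγ x hx)
      · have : γ.length ∈ α := by
          rw [← hml]
          exact List.mem_map.mpr ⟨γ, hγ, rfl⟩
        exact hαc.1 _ this
    constructor
    · rw [mem_comps]
      constructor
      · intro x hx
        obtain ⟨γ, hγ, rfl⟩ := List.mem_map.mp hx
        exact list_sum_pos (hchunk γ hγ).2 (hchunk γ hγ).1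
      · rw [← List.sum_flatten, flatten_split α δ hαc.2, hδc.2]
    · exact mem_choices_of_forall _ (fun γ hγ => (hchunk γ hγ).1)
  · rintro ⟨β, δs⟩ hp
    simp only [Finset.mem_sigma] at hp
    simp only [split_flatten]
    rw [map_sum_of_mem_choices hp.2]
  · rintro ⟨δ, α⟩ hp
    simp only [Finset.mem_sigma] at hp
    have hαc := mem_comps.mp hp.2
    simp only
    rw [flatten_split α δ hαc.2, map_length_split α δ (le_of_eq hαc.2)]
  · rintro ⟨β, δs⟩ hp
    simp only [split_flatten]

/-! ### The main theorem -/

lemma cast_prod_fix (β : List ℕ) :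
    (β.map (fun b => (b : ℚ))).prod = (β.map (fun b : ℕ => (b : ℚ))).prod := by
  induction β with
  | nil => rfl
  | cons a t ih => simp_all

lemma hC_singleton (n : ℕ) : hC [n] = h n := by
  simp [hC]

lemma length_pos_of_mem_comps {n : ℕ} (hn : 1 ≤ n) {δ : List ℕ} (hδ : δ ∈ comps n) :
    0 < δ.length := by
  rw [mem_comps] at hδ
  cases δ with
  | nil => exfalso; have := hδ.2; simp at this; omega
  | cons _ _ => simp

lemma eq_singleton_of_length_one {n : ℕ} {δ : List ℕ} (hδ : δ ∈ comps n)
    (hlen : δ.length = 1) : δ = [n] := by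
  rw [mem_comps] at hδ
  cases δ with
  | nil => simp at hlen
  | cons a t =>
    simp only [List.length_cons] at hlen
    have : t = [] := List.eq_nil_of_length_eq_zero (by omega)
    subst this
    have := hδ.2
    simp at this
    simp [this]

/-- h_n = ∑_{β ⊨ n} φ_β / (ℓ(β)! · β_1⋯β_{ℓ(β)}). -/
theorem stmt9 (n : ℕ) :
    h n = ∑ β ∈ comps n,
      (((β.length.factorial : ℚ)) * (β.map (fun b => (b : ℚ))).prod)⁻¹ • phiC β := by
  rcases Nat.eq_zero_or_pos n with rfl | hn
  · rw [comps_zero, Finset.sum_singleton]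
    simp [h, phiC]
  · -- rewrite the coefficient into the "good cast" form and expand phiC
    have step1 : ∑ β ∈ comps n,
        (((β.length.factorial : ℚ)) * (β.map (fun b => (b : ℚ))).prod)⁻¹ • phiC β
        = ∑ β ∈ comps n, ∑ δs ∈ choices β,
          ((((β.length.factorial : ℚ)) * (β.map (fun b : ℕ => (b : ℚ))).prod)⁻¹ *
            (δs.map wA).prod) • hC δs.flatten := by
      refine Finset.sum_congr rfl fun β hβ => ?_
      rw [cast_prod_fix, phiC_eq, Finset.smul_sum]
      refine Finset.sum_congr rfl fun δs hδs => ?_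
      rw [smul_smul]
    rw [step1]
    have step2 : ∑ β ∈ comps n, ∑ δs ∈ choices β,
        ((((β.length.factorial : ℚ)) * (β.map (fun b : ℕ => (b : ℚ))).prod)⁻¹ *
          (δs.map wA).prod) • hC δs.flatten
        = ∑ β ∈ comps n, ∑ δs ∈ choices β, (Fd δs) • hC δs.flatten := by
      refine Finset.sum_congr rfl fun β hβ => Finset.sum_congr rfl fun δs hδs => ?_
      have hβc := mem_comps.mp hβ
      have hall := choices_forall hβc.1 hδs
      have hms := map_sum_of_mem_choices hδs
      rw [← hms]
      rw [coeff_simp (fun γ hγ => (hall γ hγ).2.2)]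
    rw [step2, Finset.sum_sigma', reindex n, Finset.sum_sigma]
    have step3 : ∀ δ ∈ comps n,
        ∑ α ∈ comps δ.length, (Fd (split δ α)) • hC δ
          = (if δ.length = 1 then (1 : ℚ) else 0) • hC δ := by
      intro δ hδ
      have hm : 1 ≤ δ.length := length_pos_of_mem_comps hn hδ
      have hinner : ∑ α ∈ comps δ.length, Fd (split δ α)
          = if δ.length = 1 then (1 : ℚ) else 0 := by
        have : ∀ α ∈ comps δ.length, Fd (split δ α) = (-1 : ℚ) ^ δ.length * w α := by
          intro α hα
          have hαc := mem_comps.mp hα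
          rw [Fd_split hαc.2, F2_eq_w, hαc.2]
        rw [Finset.sum_congr rfl this, ← Finset.mul_sum, ← G]
        rcases Nat.lt_or_ge δ.length 2 with h2 | h2
        · have h1 : δ.length = 1 := by omega
          rw [h1, G_one, if_pos rfl]
          norm_num
        · rw [G_ge_two h2, if_neg (by omega)]
          ring
      rw [← Finset.sum_smul, hinner]
    rw [Finset.sum_congr rfl step3]
    rw [Finset.sum_eq_single_of_mem [n] (singleton_mem_comps hn)]
    · simp [hC_singleton]
    · intro δ hδ hne
      have : ¬ (δ.length = 1) := fun hl => hne (eq_singleton_of_length_one hδ hl)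
      rw [if_neg this, zero_smul]
end

section
/- Define φ_n = ∑_{α ⊨ n} ((−1)^{ℓ(α)−1} / binom(n−1, ℓ(α)−1)) r_α in NSym over ℚ, where r_α are the ribbon elements. Then φ_n = ∑_{β ⊨ n} (−1)^{ℓ(β)+1} (n/ℓ(β)) h_β. -/
open Finset

/-! ### Auxiliary lemmas -/

lemma key_sum (m t : ℕ) :
    ∑ j ∈ range (m+1), (m.choose j : ℚ) / ((m+t).choose (j+t)) = (m+t+1)/(t+1) := by
  have h1 : ∀ j ∈ range (m+1), (m.choose j : ℚ) / ((m+t).choose (j+t))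
      = ((j+t).choose t : ℚ) / ((m+t).choose t) := by
    intro j hj
    rw [mem_range, Nat.lt_succ_iff] at hj
    have hid := Nat.choose_mul (n := m+t) (k := j+t) (s := t)
      (by omega)
    rw [Nat.add_sub_cancel, Nat.add_sub_cancel] at hid
    have h2 : (0:ℚ) < ((m+t).choose (j+t) : ℚ) := by
      exact_mod_cast Nat.choose_pos (by omega)
    have h3 : (0:ℚ) < ((m+t).choose t : ℚ) := by
      exact_mod_cast Nat.choose_pos (by omega)
    field_simp
    have := congrArg (fun x : ℕ => (x : ℚ)) hid
    push_cast at this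
    linarith [this]
  rw [Finset.sum_congr rfl h1, ← Finset.sum_div]
  have h4 : ∑ j ∈ range (m+1), ((j+t).choose t : ℚ) = ((m+t+1).choose (t+1) : ℚ) := by
    exact_mod_cast congrArg (fun x : ℕ => (x:ℚ)) (Nat.sum_range_add_choose m t)
  rw [h4]
  have h5 := Nat.add_one_mul_choose_eq (m+t) t
  have h3 : (0:ℚ) < ((m+t).choose t : ℚ) := by exact_mod_cast Nat.choose_pos (by omega)
  have h6 : ((m+t+1).choose (t+1) : ℚ) * (t+1) = (m+t+1) * ((m+t).choose t) := by
    exact_mod_cast congrArg (fun x : ℕ => (x:ℚ)) h5.symm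
  field_simp
  linarith [h6]

lemma sum_inv_choose (N : ℕ) (T0 : Finset (Fin N)) :
    ∑ S ∈ univ.filter (fun S => T0 ⊆ S), (1:ℚ)/(N.choose S.card) = (N+1)/(T0.card+1) := by
  have step1 : ∑ S ∈ univ.filter (fun S => T0 ⊆ S), (1:ℚ)/(N.choose S.card)
      = ∑ U ∈ T0ᶜ.powerset, (1:ℚ)/(N.choose (U.card + T0.card)) := by
    apply Finset.sum_nbij' (i := fun S => S \ T0) (j := fun U => T0 ∪ U)
    · intro S hS
      rw [Finset.mem_powerset]
      intro x hx
      rw [Finset.mem_compl]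
      exact (Finset.mem_sdiff.mp hx).2
    · intro U hU
      simp
    · intro S hS
      rw [Finset.mem_filter] at hS
      exact Finset.union_sdiff_of_subset hS.2
    · intro U hU
      rw [Finset.mem_powerset] at hU
      have hd : Disjoint T0 U :=
        Finset.disjoint_left.mpr (fun a haT haU => (Finset.mem_compl.mp (hU haU)) haT)
      exact Finset.union_sdiff_cancel_left hd
    · intro S hS
      rw [Finset.mem_filter] at hS
      have hcard : (S \ T0).card + T0.card = S.card := by
        rw [Finset.card_sdiff_of_subset hS.2]
        exact Nat.sub_add_cancel (Finset.card_le_card hS.2)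
      rw [hcard]
  rw [step1]
  have hT : T0ᶜ.card = N - T0.card := by
    rw [Finset.card_compl]; simp
  have ht : T0.card ≤ N := by
    have := Finset.card_le_card (Finset.subset_univ T0); simpa using this
  rw [Finset.sum_powerset]
  have step2 : ∀ j ∈ range (T0ᶜ.card + 1),
      ∑ U ∈ Finset.powersetCard j T0ᶜ, (1:ℚ)/(N.choose (U.card + T0.card))
      = ((N - T0.card).choose j : ℚ) / (N.choose (j + T0.card)) := by
    intro j hj
    rw [Finset.sum_congr rfl (fun U hU => by
      rw [(Finset.mem_powersetCard.mp hU).2])]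
    rw [Finset.sum_const, Finset.card_powersetCard, hT]
    simp [nsmul_eq_mul, mul_one_div, div_eq_mul_inv]
  rw [Finset.sum_congr rfl step2, hT]
  set t := T0.card
  set m := N - t
  have hN : N = m + t := by omega
  rw [hN]
  rw [key_sum m t]
  push_cast
  ring

noncomputable def E (n : ℕ) : Composition n ≃ Finset (Fin (n - 1)) :=
  (compositionEquiv n).trans (compositionAsSetEquiv n)

lemma mem_E_iff {n : ℕ} (c : Composition n) (i : Fin (n-1)) :
    i ∈ E n c ↔ ∃ j : ℕ, j ≤ c.length ∧ c.sizeUpTo j = (i : ℕ) + 1 := by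
  simp only [E, Equiv.trans_apply, compositionAsSetEquiv, Equiv.coe_fn_mk,
    Set.toFinset_setOf, Finset.mem_filter, Finset.mem_univ, true_and]
  have hb : (compositionEquiv n c).boundaries = c.boundaries := rfl
  rw [hb]
  unfold Composition.boundaries
  simp only [Finset.mem_map, Finset.mem_univ, true_and]
  constructor
  · rintro ⟨j, hj⟩
    refine ⟨(j : ℕ), Nat.lt_succ_iff.mp j.2, ?_⟩
    have := congrArg Fin.val hj
    simpa [Composition.boundary, add_comm] using this
  · rintro ⟨j, hj, hje⟩
    refine ⟨⟨j, Nat.lt_succ_of_le hj⟩, ?_⟩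
    apply Fin.ext
    simpa [Composition.boundary, add_comm] using hje

lemma sizeUpTo_mono {n : ℕ} (c : Composition n) {i j : ℕ} (hij : i < j) (hj : j ≤ c.length) :
    c.sizeUpTo i < c.sizeUpTo j :=
  lt_of_lt_of_le (c.sizeUpTo_strict_mono (lt_of_lt_of_le hij hj))
    (c.monotone_sizeUpTo hij)

lemma cset_blocks {n : ℕ} (c : Composition n) :
    cset c.blocks = (E n c).image (fun i : Fin (n-1) => (i : ℕ) + 1) := by
  ext x
  simp only [cset, Finset.mem_image, Finset.mem_range]
  constructor
  · rintro ⟨i, hi, rfl⟩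
    have hlen : c.blocks.length = c.length := rfl
    rw [hlen] at hi
    have hx : (c.blocks.take (i+1)).sum = c.sizeUpTo (i+1) := rfl
    rw [hx]
    have h1 : 0 < c.sizeUpTo (i+1) := by
      have := sizeUpTo_mono c (i := 0) (j := i+1) (by omega) (by omega)
      simpa using this
    have h2 : c.sizeUpTo (i+1) < n := by
      have := sizeUpTo_mono c (i := i+1) (j := c.length) (by omega) le_rfl
      simpa using this
    refine ⟨⟨c.sizeUpTo (i+1) - 1, by omega⟩, ?_, by simp; omega⟩
    rw [mem_E_iff]
    exact ⟨i+1, by omega, by simp; omega⟩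
  · rintro ⟨i, hi, rfl⟩
    rw [mem_E_iff] at hi
    obtain ⟨j, hj, hje⟩ := hi
    have hin : (i : ℕ) < n - 1 := i.2
    have hjpos : 0 < j := by
      rcases Nat.eq_zero_or_pos j with rfl | h
      · simp at hje
      · exact h
    have hjlt : j < c.length := by
      rcases lt_or_ge j c.length with h | h
      · exact h
      · exfalso
        have := c.sizeUpTo_ofLength_le j h
        omega
    refine ⟨j - 1, by simpa [Composition.blocks_length] using (by omega : j - 1 < c.length - 1), ?_⟩
    have : j - 1 + 1 = j := by omega
    rw [this]
    exact hje

lemma card_cset_s17 {n : ℕ} (c : Composition n) :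
    (cset c.blocks).card = c.length - 1 := by
  rw [cset]
  rw [Finset.card_image_of_injOn, Finset.card_range]
  intro a ha b hb hab
  simp only [Finset.coe_range, Set.mem_Iio] at ha hb
  have hlen : c.blocks.length = c.length := rfl
  rw [hlen] at ha hb
  by_contra hne
  rcases Nat.lt_or_ge a b with h | h
  · have := sizeUpTo_mono c (i := a+1) (j := b+1) (by omega) (by omega)
    exact absurd hab (by simpa [Composition.sizeUpTo] using this.ne)
  · have hba : b < a := by omega
    have := sizeUpTo_mono c (i := b+1) (j := a+1) (by omega) (by omega)
    exact absurd hab.symm (by simpa [Composition.sizeUpTo] using this.ne)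

lemma shift_inj {n : ℕ} : Function.Injective (fun i : Fin (n-1) => (i : ℕ) + 1) := by
  intro a b hab
  simp only [add_left_inj] at hab
  exact Fin.ext hab

lemma card_E {n : ℕ} (c : Composition n) : (E n c).card = c.length - 1 := by
  rw [← card_cset_s17 c, cset_blocks c]
  rw [Finset.card_image_of_injective _ shift_inj]

lemma length_E_symm {n : ℕ} (hn : 1 ≤ n) (S : Finset (Fin (n-1))) :
    ((E n).symm S).length = S.card + 1 := by
  have h1 := card_E ((E n).symm S)
  rw [Equiv.apply_symm_apply] at h1
  have h2 : 0 < ((E n).symm S).length :=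
    Composition.length_pos_of_pos _ (by omega)
  omega

lemma sum_of_mem_comps {n : ℕ} {l : List ℕ} (hl : l ∈ comps n) : l.sum = n := by
  simp only [comps, Finset.mem_image, Finset.mem_univ, true_and] at hl
  obtain ⟨c, rfl⟩ := hl
  exact c.blocks_sum

lemma sum_comps {n : ℕ} {M : Type*} [AddCommMonoid M] (f : List ℕ → M) :
    ∑ l ∈ comps n, f l = ∑ c : Composition n, f c.blocks := by
  rw [comps, Finset.sum_image]
  intro x _ y _ hxy
  exact Composition.ext hxy

/-! ### The coefficient identity -/

lemma coeff_lemma {n : ℕ} (hn : 1 ≤ n) {β : List ℕ} (hβ : β ∈ comps n) :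
    ∑ α ∈ comps n, (if cset β ⊆ cset α then
        (((-1:ℚ)^(α.length - 1)) / (((n-1).choose (α.length - 1)) : ℚ)) * (-1:ℚ)^(α.length - β.length)
      else 0)
    = ((-1:ℚ)^(β.length + 1)) * ((n:ℚ)/(β.length:ℚ)) := by
  simp only [comps, Finset.mem_image, Finset.mem_univ, true_and] at hβ
  obtain ⟨b, rfl⟩ := hβ
  set T0 : Finset (Fin (n-1)) := E n b with hT0
  have hblen : b.blocks.length = T0.card + 1 := by
    have h1 := card_E b
    rw [← hT0] at h1
    have h2 : 0 < b.length := Composition.length_pos_of_pos _ (by omega)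
    have : b.blocks.length = b.length := rfl
    omega
  rw [sum_comps]
  rw [← Equiv.sum_comp (E n).symm (fun c : Composition n =>
    if cset b.blocks ⊆ cset c.blocks then
      (((-1:ℚ)^(c.length - 1)) / (((n-1).choose (c.length - 1)) : ℚ)) * (-1:ℚ)^(c.length - b.blocks.length)
    else 0)]
  have key : ∀ S : Finset (Fin (n-1)),
      (if cset b.blocks ⊆ cset ((E n).symm S).blocks then
        (((-1:ℚ)^(((E n).symm S).length - 1)) / (((n-1).choose (((E n).symm S).length - 1)) : ℚ))
          * (-1:ℚ)^(((E n).symm S).length - b.blocks.length)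
      else 0)
      = ((-1:ℚ)^T0.card) * (if T0 ⊆ S then (1:ℚ)/((n-1).choose S.card) else 0) := by
    intro S
    have hsub : (cset b.blocks ⊆ cset ((E n).symm S).blocks) ↔ T0 ⊆ S := by
      rw [cset_blocks, cset_blocks, Equiv.apply_symm_apply, ← hT0]
      exact Finset.image_subset_image_iff shift_inj
    by_cases hc : T0 ⊆ S
    · rw [if_pos (hsub.mpr hc), if_pos hc]
      rw [length_E_symm hn S, hblen]
      have htk : T0.card ≤ S.card := Finset.card_le_card hc
      simp only [Nat.add_sub_cancel]
      have hsign : (-1:ℚ)^S.card * (-1:ℚ)^(S.card + 1 - (T0.card + 1)) = (-1:ℚ)^T0.card := by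
        rw [← pow_add]
        have : S.card + (S.card + 1 - (T0.card + 1)) = 2*(S.card - T0.card) + T0.card := by omega
        rw [this, pow_add, pow_mul]
        norm_num
      calc (-1:ℚ)^S.card / ((n-1).choose S.card : ℚ) * (-1:ℚ)^(S.card + 1 - (T0.card + 1))
          = ((-1:ℚ)^S.card * (-1:ℚ)^(S.card + 1 - (T0.card + 1))) * (1/((n-1).choose S.card : ℚ)) := by
            ring
        _ = ((-1:ℚ)^T0.card) * (1/((n-1).choose S.card : ℚ)) := by rw [hsign]
    · rw [if_neg (fun hh => hc (hsub.mp hh)), if_neg hc, mul_zero]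
  rw [Finset.sum_congr rfl (fun S _ => key S), ← Finset.mul_sum]
  rw [← Finset.sum_filter, sum_inv_choose (n-1) T0]
  have hcast : (((n-1 : ℕ)) : ℚ) + 1 = (n : ℚ) := by
    have : ((n-1 : ℕ) : ℚ) = (n : ℚ) - 1 := by
      push_cast [Nat.cast_sub hn]
      ring
    rw [this]; ring
  rw [hcast, hblen]
  push_cast
  rw [pow_add]
  ring

/-- φ_n = ∑_{α ⊨ n} ((−1)^{ℓ(α)−1} / C(n−1, ℓ(α)−1)) r_α. -/
theorem stmt17 (n : ℕ) (hn : 1 ≤ n) :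
    phi n = ∑ α ∈ comps n,
      (((-1 : ℚ) ^ (α.length - 1)) / ((n - 1).choose (α.length - 1) : ℚ)) • rib α := by
  have step1 : ∀ α ∈ comps n,
      ((((-1 : ℚ) ^ (α.length - 1)) / ((n - 1).choose (α.length - 1) : ℚ)) • rib α)
      = ∑ β ∈ comps n, (if cset β ⊆ cset α then
          (((((-1 : ℚ) ^ (α.length - 1)) / ((n - 1).choose (α.length - 1) : ℚ))
            * (-1:ℚ)^(α.length - β.length)) • hC β) else 0) := by
    intro α hα
    rw [rib, sum_of_mem_comps hα, Finset.smul_sum, Finset.sum_filter]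
    refine Finset.sum_congr rfl (fun β _ => ?_)
    rw [smul_smul]
  rw [Finset.sum_congr rfl step1, Finset.sum_comm, phi]
  refine Finset.sum_congr rfl (fun β hβ => ?_)
  have step2 : ∀ α ∈ comps n,
      (if cset β ⊆ cset α then
          (((((-1 : ℚ) ^ (α.length - 1)) / ((n - 1).choose (α.length - 1) : ℚ))
            * (-1:ℚ)^(α.length - β.length)) • hC β) else 0)
      = (if cset β ⊆ cset α then
          ((((-1 : ℚ) ^ (α.length - 1)) / ((n - 1).choose (α.length - 1) : ℚ))
            * (-1:ℚ)^(α.length - β.length)) else 0) • hC β := by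
    intro α _
    rw [ite_smul, zero_smul]
  rw [Finset.sum_congr rfl step2, ← Finset.sum_smul, coeff_lemma hn hβ]
end
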